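/- arXiv:2508.02327 — 6 statements merged into one kernel-verified Lean document; each statement's English description precedes it below -/
import Mathlib

section
/- Let 0 < a < b and 0 < y ≤ 1. Then ((b+y)/(a+y))^(1-y) · (a/b) ≤ B(b,y)/B(a,y) ≤ (a/b)^y. -/
open Real MeasureTheory intervalIntegral

noncomputable def B (x y : ℝ) : ℝ := ∫ t in (0:ℝ)..1, t ^ (x - 1) * (1 - t) ^ (y - 1)

/-! Through `B x y = Γ x Γ y / Γ (x + y)`, both bounds are monotonicity statements for
`φ_y x = log Γ (x + y) - log Γ x - y log x` on `(0, ∞)`: the upper bound is `φ_y a ≤ φ_y b` and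
the lower bound is `φ_{1-y} (a + y) ≤ φ_{1-y} (b + y)`. By Gauss's product formula `φ_y x` is the
limit of the sums `∑ m ≤ n, g (x + m)` with `g w = (1 - y) log w + y log (w + 1) - log (w + y)`,
and `g' w = y (1 - y) / (w (w + 1) (w + y)) ≥ 0`. -/

open Set Filter Topology BohrMollerup

lemma betaIntegral_ofReal {x y : ℝ} : Complex.betaIntegral x y = B x y := by
  rw [Complex.betaIntegral, B, ← intervalIntegral.integral_ofReal]
  refine intervalIntegral.integral_congr fun t ht => ?_
  rw [uIcc_of_le zero_le_one] at ht
  simp only [Complex.ofReal_mul, Complex.ofReal_cpow ht.1, Complex.ofReal_cpow (sub_nonneg.2 ht.2),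
    Complex.ofReal_sub, Complex.ofReal_one]

lemma B_eq_Gamma_mul_Gamma_div {x y : ℝ} (hx : 0 < x) (hy : 0 < y) :
    B x y = Gamma x * Gamma y / Gamma (x + y) := by
  rw [← ProbabilityTheory.beta, ProbabilityTheory.beta_eq_betaIntegralReal x y hx hy,
    betaIntegral_ofReal, Complex.ofReal_re]

lemma B_pos {x y : ℝ} (hx : 0 < x) (hy : 0 < y) : 0 < B x y := by
  rw [B_eq_Gamma_mul_Gamma_div hx hy]
  exact ProbabilityTheory.beta_pos hx hy

lemma log_B {x y : ℝ} (hx : 0 < x) (hy : 0 < y) :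
    log (B x y) = log (Gamma x) + log (Gamma y) - log (Gamma (x + y)) := by
  rw [B_eq_Gamma_mul_Gamma_div hx hy, log_div, log_mul] <;> positivity

section
variable {y : ℝ}

lemma monotoneOn_mul_log_add_mul_log_sub_log (hy0 : 0 ≤ y) (hy1 : y ≤ 1) :
    MonotoneOn (fun w => (1 - y) * log w + y * log (w + 1) - log (w + y)) (Ioi 0) := by
  have hderiv : ∀ w ∈ Ioi (0 : ℝ), HasDerivAt
      (fun w => (1 - y) * log w + y * log (w + 1) - log (w + y))
      (y * (1 - y) / (w * (w + 1) * (w + y))) w := by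
    intro w (hw : 0 < w)
    refine ((((hasDerivAt_log hw.ne').const_mul (1 - y)).add
      ((((hasDerivAt_id w).add_const 1).log (by positivity)).const_mul y)).sub
      (((hasDerivAt_id w).add_const y).log (by positivity))).congr_deriv ?_
    simp only [id]
    field_simp
    ring
  refine monotoneOn_of_hasDerivWithinAt_nonneg (convex_Ioi 0)
    (fun w hw => (hderiv w hw).continuousAt.continuousWithinAt)
    (fun w hw => (hderiv w (interior_subset hw)).hasDerivWithinAt) fun w hw => ?_
  rw [interior_Ioi] at hw
  have hw : 0 < w := hw
  have : 0 ≤ y * (1 - y) := mul_nonneg hy0 (sub_nonneg.2 hy1)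
  positivity

-- The `log n` and `log n!` terms cancel because the weights `1, -(1 - y), -y` sum to zero
-- and so do the weighted arguments `x + y, x, x + 1`.
lemma logGammaSeq_interpolation_eq_sum (x : ℝ) (n : ℕ) :
    logGammaSeq (x + y) n - (1 - y) * logGammaSeq x n - y * logGammaSeq (x + 1) n =
      ∑ m ∈ Finset.range (n + 1),
        ((1 - y) * log (x + m) + y * log (x + m + 1) - log (x + m + y)) := by
  simp only [logGammaSeq, Finset.sum_sub_distrib, Finset.sum_add_distrib, ← Finset.mul_sum,
    add_right_comm x]
  ring

lemma monotoneOn_log_Gamma_add_sub (hy0 : 0 ≤ y) (hy1 : y ≤ 1) :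
    MonotoneOn (fun x => log (Gamma (x + y)) - log (Gamma x) - y * log x) (Ioi 0) := by
  have hlim : ∀ x ∈ Ioi (0 : ℝ), Tendsto
      (fun n => logGammaSeq (x + y) n - (1 - y) * logGammaSeq x n - y * logGammaSeq (x + 1) n)
      atTop (𝓝 (log (Gamma (x + y)) - log (Gamma x) - y * log x)) := by
    intro x (hx : 0 < x)
    have h := ((tendsto_log_gamma (by positivity : 0 < x + y)).sub
      ((tendsto_log_gamma hx).const_mul (1 - y))).sub
      ((tendsto_log_gamma (by positivity : 0 < x + 1)).const_mul y)
    rwa [Gamma_add_one hx.ne', log_mul hx.ne' (Gamma_pos_of_pos hx).ne',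
      show ∀ u v : ℝ, log (Gamma (x + y)) - (1 - y) * u - y * (v + u) =
        log (Gamma (x + y)) - u - y * v from fun u v => by ring] at h
  intro a (ha : 0 < a) b (hb : 0 < b) hab
  refine le_of_tendsto_of_tendsto' (hlim a ha) (hlim b hb) fun n => ?_
  simp only [logGammaSeq_interpolation_eq_sum]
  exact Finset.sum_le_sum fun m _ => monotoneOn_mul_log_add_mul_log_sub_log hy0 hy1
    (by positivity : (0 : ℝ) < a + m) (by positivity : (0 : ℝ) < b + m) (by linarith)

end

theorem stmt1 (a b y : ℝ) (ha : 0 < a) (hab : a < b) (hy0 : 0 < y) (hy1 : y ≤ 1) :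
    ((b + y) / (a + y)) ^ (1 - y) * (a / b) ≤ B b y / B a y ∧
      B b y / B a y ≤ (a / b) ^ y := by
  have hb : 0 < b := ha.trans hab
  have hratio_pos : 0 < B b y / B a y := div_pos (B_pos hb hy0) (B_pos ha hy0)
  have hlog_ratio : log (B b y / B a y) = log (Gamma (a + y)) - log (Gamma a) -
      (log (Gamma (b + y)) - log (Gamma b)) := by
    rw [log_div (B_pos hb hy0).ne' (B_pos ha hy0).ne', log_B ha hy0, log_B hb hy0]
    ring
  have hshift : ∀ x : ℝ, 0 < x → log (Gamma (x + y + (1 - y))) = log x + log (Gamma x) := by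
    intro x hx
    rw [add_add_sub_cancel, Gamma_add_one hx.ne', log_mul hx.ne' (Gamma_pos_of_pos hx).ne']
  have upper := monotoneOn_log_Gamma_add_sub hy0.le hy1 ha hb hab.le
  have lower := monotoneOn_log_Gamma_add_sub (y := 1 - y) (by linarith) (by linarith)
    (by positivity : 0 < a + y) (by positivity : 0 < b + y) (by linarith)
  simp only [hshift a ha, hshift b hb] at upper lower
  constructor
  · rw [← log_le_log_iff (by positivity) hratio_pos, log_mul (by positivity) (by positivity),
      log_rpow (by positivity), log_div (by positivity) (by positivity), log_div ha.ne' hb.ne',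
      hlog_ratio]
    linarith
  · rw [← log_le_log_iff hratio_pos (by positivity), log_rpow (div_pos ha hb),
      log_div ha.ne' hb.ne', hlog_ratio]
    linarith
end

section
/- Let 0 < a < b and 0 < y ≤ 1. Then B(b,y)/B(a,y) ≤ (a/b) · (b^b (a+y)^(a+y) / (a^a (b+y)^(b+y)))^(1 - 1/y). -/
open Real MeasureTheory intervalIntegral

/-!
Since `B(x, y) = Γ(x)Γ(y)/Γ(x+y)`, the claim says that `φ(x) = log Γ(x) - log Γ(x+y) + E(x)` is
antitone on `(0, ∞)`, where `E(x) = log x + (1/y - 1)(x log x - (x+y) log (x+y))` is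
`ratioExponent y x`. By Euler's limit formula for `Γ`, `φ(b) - φ(a)` is the limit of
`Q_n(b) - Q_n(a)` for `Q_n(x) = ∑_{j<n} log ((x+j+y)/(x+j)) + E(x) - log (x+n)` (`potential`),
so it suffices that each `Q_n` is antitone. With `g(u) = log ((u+y)/u)` (`logGap y u`), the
inequality `log (1+t) ≥ t/(1+t)` gives `1/(u+y) - 1/(u+1) ≤ (1/y - 1)(g(u) - g(u+1))` for
`y ≤ 1`; summed over `u = x + j` this telescopes to `Q_n'(x) ≤ -(1/y - 1) g(x+n) ≤ 0`.
-/

open Filter Topology Finset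

theorem ofReal_B (x y : ℝ) : (B x y : ℂ) = Complex.betaIntegral x y := by
  rw [B, ← intervalIntegral.integral_ofReal]
  refine intervalIntegral.integral_congr fun t ht => ?_
  rw [Set.uIcc_of_le zero_le_one] at ht
  push_cast
  rw [Complex.ofReal_cpow ht.1, Complex.ofReal_cpow (sub_nonneg.2 ht.2)]
  push_cast
  rfl

theorem B_eq_beta {x y : ℝ} (hx : 0 < x) (hy : 0 < y) : B x y = ProbabilityTheory.beta x y := by
  rw [ProbabilityTheory.beta_eq_betaIntegralReal x y hx hy, ← ofReal_B, Complex.ofReal_re]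

noncomputable def logGap (y u : ℝ) : ℝ := log (u + y) - log u

theorem div_le_logGap_sub_logGap_add_one {y u : ℝ} (hy : 0 < y) (hu : 0 < u) :
    y / ((u + 1) * (u + y)) ≤ logGap y u - logGap y (u + 1) := by
  have hz : 0 < (u + y) * (u + 1) / (u * (u + 1 + y)) := by positivity
  have hlog : logGap y u - logGap y (u + 1) = log ((u + y) * (u + 1) / (u * (u + 1 + y))) := by
    rw [log_div (by positivity) (by positivity), log_mul (by positivity) (by positivity),
      log_mul (by positivity) (by positivity), logGap, logGap]
    ring
  calc y / ((u + 1) * (u + y)) = 1 - ((u + y) * (u + 1) / (u * (u + 1 + y)))⁻¹ := by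
        field_simp
        ring
    _ ≤ _ := hlog ▸ one_sub_inv_le_log_of_pos hz

theorem one_div_sub_one_div_le_logGap_sub {y u : ℝ} (hy0 : 0 < y) (hy1 : y ≤ 1) (hu : 0 < u) :
    1 / (u + y) - 1 / (u + 1) ≤ (1 / y - 1) * (logGap y u - logGap y (u + 1)) := by
  have hc : 0 ≤ 1 / y - 1 := by rw [sub_nonneg, le_div_iff₀ hy0]; linarith
  calc 1 / (u + y) - 1 / (u + 1) = (1 / y - 1) * (y / ((u + 1) * (u + y))) := by
        field_simp
        ring
    _ ≤ _ := mul_le_mul_of_nonneg_left (div_le_logGap_sub_logGap_add_one hy0 hu) hc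

theorem logGap_nonneg {y u : ℝ} (hy : 0 ≤ y) (hu : 0 < u) : 0 ≤ logGap y u :=
  sub_nonneg.2 (log_le_log hu (by linarith))

theorem hasDerivAt_logGap {y u : ℝ} (hu : u ≠ 0) (huy : u + y ≠ 0) :
    HasDerivAt (logGap y) (1 / (u + y) - 1 / u) u := by
  have h := (((hasDerivAt_id u).add_const y).log huy).sub (hasDerivAt_log hu)
  exact h.congr_deriv (by simp only [one_div, id])

noncomputable def ratioExponent (y x : ℝ) : ℝ :=
  log x + (1 / y - 1) * (x * log x - (x + y) * log (x + y))

theorem hasDerivAt_ratioExponent {y x : ℝ} (hx : x ≠ 0) (hxy : x + y ≠ 0) :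
    HasDerivAt (ratioExponent y) (1 / x - (1 / y - 1) * logGap y x) x := by
  have h := (hasDerivAt_log hx).add (((hasDerivAt_mul_log hx).sub
    ((hasDerivAt_mul_log hxy).comp x ((hasDerivAt_id x).add_const y))).const_mul (1 / y - 1))
  exact h.congr_deriv (by simp only [logGap, one_div]; ring)

noncomputable def potential (y : ℝ) (n : ℕ) (x : ℝ) : ℝ :=
  ∑ j ∈ range n, logGap y (x + j) + ratioExponent y x - log (x + n)

theorem hasDerivAt_potential {y : ℝ} (hy : 0 < y) (n : ℕ) {x : ℝ} (hx : 0 < x) :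
    HasDerivAt (potential y n)
      (∑ j ∈ range n, (1 / (x + j + y) - 1 / (x + j)) + (1 / x - (1 / y - 1) * logGap y x)
        - 1 / (x + n)) x := by
  have hsum : HasDerivAt (fun x => ∑ j ∈ range n, logGap y (x + j))
      (∑ j ∈ range n, (1 / (x + j + y) - 1 / (x + j))) x :=
    HasDerivAt.fun_sum fun j _ =>
      (hasDerivAt_logGap (by positivity) (by positivity)).comp_add_const x (j : ℝ)
  have hlog : HasDerivAt (fun x => log (x + n)) (1 / (x + n)) x := by
    simpa [one_div] using ((hasDerivAt_id x).add_const (n : ℝ)).log (by positivity)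
  exact (hsum.add (hasDerivAt_ratioExponent hx.ne' (by positivity))).sub hlog

theorem deriv_potential_nonpos {y : ℝ} (hy0 : 0 < y) (hy1 : y ≤ 1) (n : ℕ) {x : ℝ} (hx : 0 < x) :
    deriv (potential y n) x ≤ 0 := by
  rw [(hasDerivAt_potential hy0 n hx).deriv]
  set F : ℕ → ℝ := fun j => 1 / (x + j)
  set G : ℕ → ℝ := fun j => logGap y (x + j)
  have hterm : ∀ j ∈ range n,
      1 / (x + j + y) - 1 / (x + j) ≤ (F (j + 1) - F j) - (1 / y - 1) * (G (j + 1) - G j) := by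
    intro j _
    have h := one_div_sub_one_div_le_logGap_sub hy0 hy1 (u := x + j) (by positivity)
    simp only [F, G, Nat.cast_succ, ← add_assoc]
    linarith
  have htel : ∑ j ∈ range n, (1 / (x + j + y) - 1 / (x + j))
      ≤ (F n - F 0) - (1 / y - 1) * (G n - G 0) := by
    rw [← sum_range_sub F, ← sum_range_sub G, mul_sum, ← sum_sub_distrib]
    exact sum_le_sum hterm
  have hc : 0 ≤ 1 / y - 1 := by rw [sub_nonneg, le_div_iff₀ hy0]; linarith
  have hgap := mul_nonneg hc (logGap_nonneg hy0.le (u := x + n) (by positivity))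
  simp only [F, G, Nat.cast_zero, add_zero] at htel
  linarith

theorem antitoneOn_potential {y : ℝ} (hy0 : 0 < y) (hy1 : y ≤ 1) (n : ℕ) :
    AntitoneOn (potential y n) (Set.Ioi 0) := by
  refine antitoneOn_of_deriv_nonpos (convex_Ioi 0)
    (fun x hx => (hasDerivAt_potential hy0 n hx).continuousAt.continuousWithinAt)
    (fun x hx => ?_) (fun x hx => deriv_potential_nonpos hy0 hy1 n (interior_subset hx))
  exact (hasDerivAt_potential hy0 n (interior_subset hx)).differentiableAt.differentiableWithinAt

noncomputable def pochhammerRatio (y x : ℝ) (n : ℕ) : ℝ := ∏ j ∈ range n, (x + j + y) / (x + j)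

theorem exp_sum_logGap {y x : ℝ} (hy : 0 < y) (hx : 0 < x) (n : ℕ) :
    exp (∑ j ∈ range n, logGap y (x + j)) = pochhammerRatio y x n := by
  rw [exp_sum, pochhammerRatio]
  refine prod_congr rfl fun j _ => ?_
  rw [logGap, exp_sub, exp_log (by positivity), exp_log (by positivity)]

theorem pochhammerRatio_div_le {y a b : ℝ} (hy0 : 0 < y) (hy1 : y ≤ 1) (ha : 0 < a) (hab : a ≤ b)
    (n : ℕ) :
    pochhammerRatio y b n / pochhammerRatio y a n
      ≤ exp (ratioExponent y a - ratioExponent y b) * ((b + n) / (a + n)) := by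
  have hb := ha.trans_le hab
  have hanti := antitoneOn_potential hy0 hy1 n (Set.mem_Ioi.2 ha) (Set.mem_Ioi.2 hb) hab
  rw [← exp_sum_logGap hy0 hb, ← exp_sum_logGap hy0 ha, ← exp_sub,
    ← exp_log (by positivity : 0 < b + n), ← exp_log (by positivity : 0 < a + n), ← exp_sub,
    ← exp_add, exp_le_exp]
  unfold potential at hanti
  linarith

theorem GammaSeq_div_GammaSeq_add {y x : ℝ} (hy : 0 < y) (hx : 0 < x) {n : ℕ} (hn : n ≠ 0) :
    GammaSeq x n / GammaSeq (x + y) n = pochhammerRatio y x (n + 1) / (n : ℝ) ^ y := by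
  have hn' : (0 : ℝ) < n := by positivity
  have hpos : ∀ z : ℝ, 0 < z → 0 < ∏ j ∈ range (n + 1), (z + j) := fun z hz =>
    prod_pos fun j _ => by positivity
  simp only [GammaSeq, pochhammerRatio, prod_div_distrib, add_right_comm x y]
  rw [rpow_add hn']
  have := hpos x hx
  have := hpos (x + y) (by positivity)
  field_simp

theorem tendsto_pochhammerRatio_div {y a b : ℝ} (hy : 0 < y) (ha : 0 < a) (hb : 0 < b) :
    Tendsto (fun n => pochhammerRatio y b n / pochhammerRatio y a n) atTop
      (𝓝 (Gamma b / Gamma (b + y) / (Gamma a / Gamma (a + y)))) := by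
  have hGammaSeq : ∀ x, 0 < x → Tendsto (fun n => GammaSeq x n / GammaSeq (x + y) n) atTop
      (𝓝 (Gamma x / Gamma (x + y))) := fun x hx =>
    (GammaSeq_tendsto_Gamma x).div (GammaSeq_tendsto_Gamma _) (Gamma_pos_of_pos (by positivity)).ne'
  have hlim := (hGammaSeq b hb).div (hGammaSeq a ha)
    (div_pos (Gamma_pos_of_pos ha) (Gamma_pos_of_pos (by positivity))).ne'
  rw [← tendsto_add_atTop_iff_nat 1]
  refine hlim.congr' ?_
  filter_upwards [eventually_ne_atTop 0] with n hn
  have : (n : ℝ) ^ y ≠ 0 := (rpow_pos_of_pos (by positivity) y).ne'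
  rw [Pi.div_apply, GammaSeq_div_GammaSeq_add hy hb hn, GammaSeq_div_GammaSeq_add hy ha hn,
    div_div_div_cancel_right₀ this]

theorem tendsto_add_div_add (a b : ℝ) : Tendsto (fun n : ℕ => (b + n) / (a + n)) atTop (𝓝 1) := by
  have h := (tendsto_natCast_div_add_atTop a).div (tendsto_natCast_div_add_atTop b) one_ne_zero
  rw [div_one] at h
  refine h.congr' ?_
  filter_upwards [eventually_ne_atTop 0] with n hn
  rw [Pi.div_apply, div_div_div_cancel_left' _ _ (Nat.cast_ne_zero.2 hn), add_comm, add_comm a]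

theorem Gamma_ratio_le {y a b : ℝ} (hy0 : 0 < y) (hy1 : y ≤ 1) (ha : 0 < a) (hab : a ≤ b) :
    Gamma b / Gamma (b + y) / (Gamma a / Gamma (a + y))
      ≤ exp (ratioExponent y a - ratioExponent y b) := by
  have hbound := (tendsto_add_div_add a b).const_mul (exp (ratioExponent y a - ratioExponent y b))
  rw [mul_one] at hbound
  exact le_of_tendsto_of_tendsto' (tendsto_pochhammerRatio_div hy0 ha (ha.trans_le hab)) hbound
    (pochhammerRatio_div_le hy0 hy1 ha hab)

theorem exp_ratioExponent_sub {y a b : ℝ} (ha : 0 < a) (hb : 0 < b) (hay : 0 < a + y)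
    (hby : 0 < b + y) :
    exp (ratioExponent y a - ratioExponent y b)
      = a / b * (b ^ b * (a + y) ^ (a + y) / (a ^ a * (b + y) ^ (b + y))) ^ (1 - 1 / y) := by
  have hlog : log (b ^ b * (a + y) ^ (a + y) / (a ^ a * (b + y) ^ (b + y)))
      = b * log b + (a + y) * log (a + y) - (a * log a + (b + y) * log (b + y)) := by
    rw [log_div (by positivity) (by positivity), log_mul (by positivity) (by positivity),
      log_mul (by positivity) (by positivity), log_rpow hb, log_rpow hay, log_rpow ha, log_rpow hby]
  rw [rpow_def_of_pos (by positivity), hlog, ← exp_log (div_pos ha hb), ← exp_add,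
    log_div ha.ne' hb.ne', ratioExponent, ratioExponent]
  ring_nf

theorem stmt6 (a b y : ℝ) (ha : 0 < a) (hab : a < b) (hy0 : 0 < y) (hy1 : y ≤ 1) :
    B b y / B a y ≤
      (a / b) * (b ^ b * (a + y) ^ (a + y) / (a ^ a * (b + y) ^ (b + y))) ^ (1 - 1 / y) := by
  have hb := ha.trans hab
  rw [B_eq_beta hb hy0, B_eq_beta ha hy0,
    ← exp_ratioExponent_sub ha hb (by positivity) (by positivity)]
  calc ProbabilityTheory.beta b y / ProbabilityTheory.beta a y
      = Gamma b / Gamma (b + y) / (Gamma a / Gamma (a + y)) := by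
        simp only [ProbabilityTheory.beta]
        field_simp
    _ ≤ _ := Gamma_ratio_le hy0 hy1 ha hab.le
end

section
/- If 1 ≤ y ≤ 2 and 1 ≤ a < b ≤ 2, then B(b+1,y) ≥ B(a+1,y) + (1/(8·ln(3/2)))·(5/9)^(y-1)·((4/9)^(b-1) - (4/9)^(a-1)). -/
/-!
Write `D y = B (a+1) y - B (b+1) y = ∫₀¹ (tᵃ - tᵇ) (1-t)^(y-1) dt`. Hölder's inequality makes `D`
log-convex, so `D y ≤ D 1 ^ (2-y) * D 2 ^ (y-1)`, and `D 1`, `D 2` are explicit rational functions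
of `a` and `b`. Comparing derivatives on `[1, 2]` bounds them by `c (q a - q b)` and
`(5/9) c (q a - q b)`, where `c = 1 / (8 log (3/2))` and `q x = (4/9)^(x-1)`; the derivative
comparison comes down to `4 / (x+1)^2 ≤ (4/9)^(x-1)`, which is Bernoulli's inequality
`(3/2)^(x-1) ≤ (x+1)/2`.
-/

open Real MeasureTheory intervalIntegral

open Set

theorem integral_rpow_mul_rpow_le {α : Type*} [MeasurableSpace α] {μ : Measure α} {f g : α → ℝ}
    (hf0 : 0 ≤ᵐ[μ] f) (hg0 : 0 ≤ᵐ[μ] g) (hf : Integrable f μ) (hg : Integrable g μ)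
    {p q : ℝ} (hp : 0 ≤ p) (hq : 0 ≤ q) (hpq : p + q = 1) :
    ∫ a, f a ^ p * g a ^ q ∂μ ≤ (∫ a, f a ∂μ) ^ p * (∫ a, g a ∂μ) ^ q := by
  have hfg0 : 0 ≤ᵐ[μ] fun a => f a ^ p * g a ^ q := by
    filter_upwards [hf0, hg0] with a hfa hga
    exact mul_nonneg (rpow_nonneg hfa p) (rpow_nonneg hga q)
  have hfg : AEStronglyMeasurable (fun a => f a ^ p * g a ^ q) μ :=
    ((hf.1.aemeasurable.pow_const p).mul (hg.1.aemeasurable.pow_const q)).aestronglyMeasurable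
  rw [integral_eq_lintegral_of_nonneg_ae hf0 hf.1, integral_eq_lintegral_of_nonneg_ae hg0 hg.1,
    integral_eq_lintegral_of_nonneg_ae hfg0 hfg, ENNReal.toReal_rpow, ENNReal.toReal_rpow,
    ← ENNReal.toReal_mul]
  refine ENNReal.toReal_mono (ENNReal.mul_ne_top (ENNReal.rpow_ne_top_of_nonneg hp
    hf.lintegral_lt_top.ne) (ENNReal.rpow_ne_top_of_nonneg hq hg.lintegral_lt_top.ne)) ?_
  calc ∫⁻ a, ENNReal.ofReal (f a ^ p * g a ^ q) ∂μ
      = ∫⁻ a, ENNReal.ofReal (f a) ^ p * ENNReal.ofReal (g a) ^ q ∂μ := by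
        refine lintegral_congr_ae ?_
        filter_upwards [hf0, hg0] with a hfa hga
        rw [ENNReal.ofReal_mul (rpow_nonneg hfa p), ENNReal.ofReal_rpow_of_nonneg hfa hp,
          ENNReal.ofReal_rpow_of_nonneg hga hq]
    _ ≤ _ := ENNReal.lintegral_mul_norm_pow_le hf.1.aemeasurable.ennreal_ofReal
        hg.1.aemeasurable.ennreal_ofReal hp hq hpq

theorem integral_mul_rpow_le {α : Type*} [MeasurableSpace α] {μ : Measure α} {f w : α → ℝ}
    (hf0 : 0 ≤ᵐ[μ] f) (hw0 : 0 ≤ᵐ[μ] w) (hf : Integrable f μ) (hfw : Integrable (f * w) μ)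
    {s : ℝ} (hs0 : 0 ≤ s) (hs1 : s ≤ 1) :
    ∫ a, f a * w a ^ s ∂μ ≤ (∫ a, f a ∂μ) ^ (1 - s) * (∫ a, f a * w a ∂μ) ^ s := by
  calc ∫ a, f a * w a ^ s ∂μ = ∫ a, f a ^ (1 - s) * (f a * w a) ^ s ∂μ := by
        refine integral_congr_ae ?_
        filter_upwards [hf0, hw0] with a hfa hwa
        rw [mul_rpow hfa hwa, ← mul_assoc, ← rpow_add' hfa (by simp), sub_add_cancel, rpow_one]
    _ ≤ _ := by
        refine integral_rpow_mul_rpow_le hf0 ?_ hf hfw (by linarith) hs0 (by ring)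
        filter_upwards [hf0, hw0] with a hfa hwa
        exact mul_nonneg hfa hwa

theorem sub_le_sub_of_hasDerivAt_le {f g f' g' : ℝ → ℝ} {a b : ℝ} (hab : a ≤ b)
    (hf : ∀ x ∈ Icc a b, HasDerivAt f (f' x) x) (hg : ∀ x ∈ Icc a b, HasDerivAt g (g' x) x)
    (hle : ∀ x ∈ Ioo a b, f' x ≤ g' x) : f b - f a ≤ g b - g a := by
  have hmono : MonotoneOn (fun x => g x - f x) (Icc a b) := by
    refine monotoneOn_of_hasDerivWithinAt_nonneg (f' := fun x => g' x - f' x) (convex_Icc a b)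
      (fun x hx => ((hg x hx).sub (hf x hx)).continuousAt.continuousWithinAt) (fun x hx => ?_)
      (fun x hx => ?_)
    · rw [interior_Icc] at hx
      exact ((hg x (Ioo_subset_Icc_self hx)).sub (hf x (Ioo_subset_Icc_self hx))).hasDerivWithinAt
    · rw [interior_Icc] at hx
      exact sub_nonneg.2 (hle x hx)
  have := hmono (left_mem_Icc.2 hab) (right_mem_Icc.2 hab) hab
  simp only at this
  linarith

theorem rpow_one_sub_mul_rpow_le {u v R k s : ℝ} (hu : 0 ≤ u) (hv : 0 ≤ v) (huR : u ≤ R)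
    (hvR : v ≤ k * R) (hk : 0 ≤ k) (hs0 : 0 ≤ s) (hs1 : s ≤ 1) :
    u ^ (1 - s) * v ^ s ≤ k ^ s * R := by
  have hR : 0 ≤ R := hu.trans huR
  calc u ^ (1 - s) * v ^ s ≤ R ^ (1 - s) * (k * R) ^ s := by
        gcongr
    _ = k ^ s * R := by
        rw [mul_rpow hk hR, mul_left_comm, ← rpow_add' hR (by simp), sub_add_cancel, rpow_one]

theorem integral_rpow_zero_one {p : ℝ} (hp : -1 < p) : ∫ t in (0:ℝ)..1, t ^ p = (p + 1)⁻¹ := by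
  rw [integral_rpow (Or.inl hp), one_rpow, zero_rpow (by linarith), sub_zero, one_div]

theorem integral_rpow_mul_one_sub {p : ℝ} (hp : -1 < p) :
    ∫ t in (0:ℝ)..1, t ^ p * (1 - t) = (p + 1)⁻¹ - (p + 2)⁻¹ := by
  have hsplit : ∀ t ∈ uIcc (0:ℝ) 1, t ^ p * (1 - t) = t ^ p - t ^ (p + 1) := by
    intro t ht
    rw [uIcc_of_le zero_le_one] at ht
    rw [rpow_add_one' ht.1 (by linarith)]
    ring
  have hp1 : -1 < p + 1 := by linarith
  rw [integral_congr hsplit, integral_sub (intervalIntegrable_rpow' hp)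
    (intervalIntegrable_rpow' hp1), integral_rpow_zero_one hp, integral_rpow_zero_one hp1]
  ring_nf

theorem B_add_one_one {x : ℝ} (hx : -1 < x) : B (x + 1) 1 = (x + 1)⁻¹ := by
  simp only [B, add_sub_cancel_right, sub_self, rpow_zero, mul_one]
  exact integral_rpow_zero_one hx

theorem B_add_one_two {x : ℝ} (hx : -1 < x) : B (x + 1) 2 = (x + 1)⁻¹ - (x + 2)⁻¹ := by
  simp only [B, add_sub_cancel_right, show (2:ℝ) - 1 = 1 by norm_num, rpow_one]
  exact integral_rpow_mul_one_sub hx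

theorem B_add_one_sub_B_add_one {a b y : ℝ} (ha : 0 ≤ a) (hb : 0 ≤ b) (hy : 1 ≤ y) :
    B (a + 1) y - B (b + 1) y = ∫ t in (0:ℝ)..1, (t ^ a - t ^ b) * (1 - t) ^ (y - 1) := by
  simp only [B, add_sub_cancel_right]
  rw [← integral_sub (Continuous.intervalIntegrable (by fun_prop (disch := linarith)) _ _)
    (Continuous.intervalIntegrable (by fun_prop (disch := linarith)) _ _)]
  simp only [sub_mul]

theorem B_add_one_sub_B_add_one_le {a b y : ℝ} (ha : 0 ≤ a) (hab : a ≤ b) (hy1 : 1 ≤ y)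
    (hy2 : y ≤ 2) :
    B (a + 1) y - B (b + 1) y ≤
      (B (a + 1) 1 - B (b + 1) 1) ^ (2 - y) * (B (a + 1) 2 - B (b + 1) 2) ^ (y - 1) := by
  have hb : 0 ≤ b := ha.trans hab
  rw [B_add_one_sub_B_add_one ha hb hy1, B_add_one_sub_B_add_one ha hb le_rfl,
    B_add_one_sub_B_add_one ha hb one_le_two]
  simp only [sub_self, rpow_zero, mul_one, show (2:ℝ) - 1 = 1 by norm_num, rpow_one,
    integral_of_le zero_le_one]
  rw [show 2 - y = 1 - (y - 1) by ring]
  have hf0 : ∀ t ∈ Ioc (0:ℝ) 1, 0 ≤ t ^ a - t ^ b := fun t ht =>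
    sub_nonneg.2 (rpow_le_rpow_of_exponent_ge ht.1 ht.2 hab)
  have hw0 : ∀ t ∈ Ioc (0:ℝ) 1, 0 ≤ 1 - t := fun t ht => sub_nonneg.2 ht.2
  exact integral_mul_rpow_le (f := fun t => t ^ a - t ^ b) (w := fun t => 1 - t)
    (ae_restrict_of_forall_mem measurableSet_Ioc hf0)
    (ae_restrict_of_forall_mem measurableSet_Ioc hw0)
    (Continuous.integrableOn_Ioc (by fun_prop (disch := assumption)))
    (Continuous.integrableOn_Ioc (by fun_prop (disch := assumption))) (by linarith) (by linarith)

theorem four_ninths_rpow (x : ℝ) : (4 / 9 : ℝ) ^ x = (((3 / 2 : ℝ) ^ x) ^ 2)⁻¹ := by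
  rw [show (4 / 9 : ℝ) = ((3 / 2) ^ 2)⁻¹ by norm_num, inv_rpow (by norm_num),
    ← rpow_natCast_mul (by norm_num), ← rpow_mul_natCast (by norm_num), mul_comm]

theorem four_div_sq_le_four_ninths_rpow {x : ℝ} (h1 : 1 ≤ x) (h2 : x ≤ 2) :
    4 / (x + 1) ^ 2 ≤ (4 / 9 : ℝ) ^ (x - 1) := by
  have hbernoulli : (3 / 2 : ℝ) ^ (x - 1) ≤ (x + 1) / 2 := by
    have := rpow_one_add_le_one_add_mul_self (s := 1 / 2) (by norm_num) (p := x - 1)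
      (by linarith) (by linarith)
    norm_num at this
    linarith
  rw [four_ninths_rpow, show 4 / (x + 1) ^ 2 = (((x + 1) / 2) ^ 2)⁻¹ by field_simp; ring]
  gcongr

theorem hasDerivAt_four_ninths_rpow (x : ℝ) :
    HasDerivAt (fun x => 1 / (8 * log (3 / 2)) * (4 / 9 : ℝ) ^ (x - 1))
      (-((4 / 9 : ℝ) ^ (x - 1) / 4)) x := by
  have hlog : log (4 / 9) = -2 * log (3 / 2) := by
    rw [show (4 / 9 : ℝ) = ((3 / 2) ^ 2)⁻¹ by norm_num, log_inv, log_pow]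
    push_cast
    ring
  have hlog_pos : 0 < log (3 / 2) := log_pos (by norm_num)
  refine (((hasStrictDerivAt_const_rpow (by norm_num : (0:ℝ) < 4 / 9) (x - 1)).hasDerivAt.comp x
    ((hasDerivAt_id' x).sub_const 1)).const_mul (1 / (8 * log (3 / 2)))).congr_deriv ?_
  rw [hlog]
  field_simp
  ring

theorem inv_add_one_sub_inv_add_one_le {a b : ℝ} (ha : 1 ≤ a) (hab : a ≤ b) (hb : b ≤ 2) :
    (a + 1)⁻¹ - (b + 1)⁻¹ ≤
      1 / (8 * log (3 / 2)) * ((4 / 9 : ℝ) ^ (a - 1) - (4 / 9 : ℝ) ^ (b - 1)) := by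
  have := sub_le_sub_of_hasDerivAt_le (g := fun x => (x + 1)⁻¹) hab
    (fun x _ => hasDerivAt_four_ninths_rpow x)
    (fun x hx => ((hasDerivAt_id' x).add_const 1).inv (by linarith [hx.1]))
    (fun x hx => by
      have := four_div_sq_le_four_ninths_rpow (ha.trans hx.1.le) (hx.2.le.trans hb)
      rw [show -1 / (x + 1) ^ 2 = -(4 / (x + 1) ^ 2 / 4) by ring]
      linarith)
  linarith

theorem inv_add_one_sub_inv_add_two_sub_le {a b : ℝ} (ha : 1 ≤ a) (hab : a ≤ b) (hb : b ≤ 2) :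
    ((a + 1)⁻¹ - (a + 2)⁻¹) - ((b + 1)⁻¹ - (b + 2)⁻¹) ≤
      5 / 9 * (1 / (8 * log (3 / 2)) * ((4 / 9 : ℝ) ^ (a - 1) - (4 / 9 : ℝ) ^ (b - 1))) := by
  have := sub_le_sub_of_hasDerivAt_le (g := fun x => (x + 1)⁻¹ - (x + 2)⁻¹) hab
    (fun x _ => (hasDerivAt_four_ninths_rpow x).const_mul (5 / 9))
    (fun x hx => (((hasDerivAt_id' x).add_const 1).inv (by linarith [hx.1])).sub
      (((hasDerivAt_id' x).add_const 2).inv (by linarith [hx.1])))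
    (fun x hx => by
      have hq := four_div_sq_le_four_ninths_rpow (ha.trans hx.1.le) (hx.2.le.trans hb)
      have h21 : 4 / 9 / (x + 1) ^ 2 ≤ 1 / (x + 2) ^ 2 := by
        rw [div_le_div_iff₀ (by nlinarith [hx.1]) (by nlinarith [hx.1])]
        nlinarith [hx.1]
      rw [show 4 / 9 / (x + 1) ^ 2 = 4 / (x + 1) ^ 2 / 9 by ring] at h21
      rw [show -1 / (x + 1) ^ 2 = -(4 / (x + 1) ^ 2 / 4) by ring,
        show -1 / (x + 2) ^ 2 = -(1 / (x + 2) ^ 2) by ring]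
      linarith)
  linarith

theorem stmt11 (a b y : ℝ) (hy1 : 1 ≤ y) (hy2 : y ≤ 2) (ha : 1 ≤ a) (hab : a < b) (hb : b ≤ 2) :
    B (b + 1) y ≥
      B (a + 1) y +
        (1 / (8 * Real.log (3 / 2))) * ((5 : ℝ) / 9) ^ (y - 1) *
          (((4 : ℝ) / 9) ^ (b - 1) - ((4 : ℝ) / 9) ^ (a - 1)) := by
  have hinterp := B_add_one_sub_B_add_one_le (by linarith) hab.le hy1 hy2
  rw [B_add_one_one (by linarith), B_add_one_one (by linarith), B_add_one_two (by linarith),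
    B_add_one_two (by linarith), show 2 - y = 1 - (y - 1) by ring] at hinterp
  have hpos₁ : 0 ≤ (a + 1)⁻¹ - (b + 1)⁻¹ := sub_nonneg.2 (by gcongr)
  have hpos₂ : 0 ≤ ((a + 1)⁻¹ - (a + 2)⁻¹) - ((b + 1)⁻¹ - (b + 2)⁻¹) := by
    have hprod : ∀ x : ℝ, 0 ≤ x → (x + 1)⁻¹ - (x + 2)⁻¹ = ((x + 1) * (x + 2))⁻¹ := by
      intro x hx
      field_simp
      ring
    rw [hprod a (by linarith), hprod b (by linarith), sub_nonneg]
    gcongr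
    linarith
  have hbound := rpow_one_sub_mul_rpow_le (s := y - 1) hpos₁ hpos₂
    (inv_add_one_sub_inv_add_one_le ha hab.le hb) (inv_add_one_sub_inv_add_two_sub_le ha hab.le hb)
    (by norm_num) (by linarith) (by linarith)
  linear_combination hinterp.trans hbound
end

section
/- If either (y > 2 and 0 < a < b ≤ 1) or (0 < y < 1 and 2 ≤ a < b), then B(b+1,y) ≤ B(a+1,y) + (1/(8·ln(3/2)))·(5/9)^(y-1)·((4/9)^(b-1) - (4/9)^(a-1)). -/
/-!
For `p = y - 1 ∉ (0, 1)` the map `u ↦ u ^ p` is convex, so `(1 - t) ^ p` lies above its tangent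
line at `u = 5 / 9`, a linear function `α - β t`. As `t ^ a ≥ t ^ b` on `[0, 1]`,
`B(a+1, y) - B(b+1, y) = ∫ (t ^ a - t ^ b) (1 - t) ^ p ≥ ∫ (t ^ a - t ^ b) (α - β t)`,
which is `m a - m b` with `m x = α / (x + 1) - β / (x + 2)`. It remains to see that
`m x - (5/9) ^ p (4/9) ^ (x - 1) / (8 log (3/2))` is antitone on `[a, b]`; after bounding
`(4/9) ^ (x - 1)` by Bernoulli's inequality, the sign of its derivative comes down to an
elementary inequality in each of the two ranges of `(x, p)`.
-/

open Real MeasureTheory intervalIntegral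

open Set

theorem one_add_mul_self_le_rpow_one_add_of_nonpos {s : ℝ} (hs : -1 < s) {p : ℝ}
    (hp1 : -1 ≤ p) (hp2 : p ≤ 0) : 1 + p * s ≤ (1 + s) ^ p := by
  have hs' : 0 < 1 + s := by linarith
  have hq : 0 < (1 + s) ^ p := rpow_pos_of_pos hs' p
  have h : ((1 + s) ^ p)⁻¹ ≤ 1 + -p * s := by
    rw [← rpow_neg hs'.le]
    exact rpow_one_add_le_one_add_mul_self hs.le (by linarith) (by linarith)
  rw [inv_le_iff_one_le_mul₀ hq] at h
  nlinarith [sq_nonneg (p * s)]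

theorem rpow_add_mul_rpow_sub_one_mul_sub_le_rpow {c u p : ℝ} (hc : 0 < c) (hu : 0 < u)
    (hp : -1 ≤ p ∧ p ≤ 0 ∨ 1 ≤ p) : c ^ p + p * c ^ (p - 1) * (u - c) ≤ u ^ p := by
  have hs : -1 < u / c - 1 := by linarith [div_pos hu hc]
  have hbern : 1 + p * (u / c - 1) ≤ (u / c) ^ p := by
    rcases hp with ⟨hp1, hp2⟩ | hp
    · simpa using one_add_mul_self_le_rpow_one_add_of_nonpos hs hp1 hp2
    · simpa using one_add_mul_self_le_rpow_one_add hs.le hp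
  calc c ^ p + p * c ^ (p - 1) * (u - c) = c ^ p * (1 + p * (u / c - 1)) := by
        rw [rpow_sub_one hc.ne']; field_simp
    _ ≤ c ^ p * (u / c) ^ p := mul_le_mul_of_nonneg_left hbern (rpow_nonneg hc.le p)
    _ = u ^ p := by rw [← mul_rpow hc.le (div_pos hu hc).le, mul_div_cancel₀ u hc.ne']

theorem five_ninths_rpow_mul_le_one_sub_rpow {p t : ℝ} (hp : -1 ≤ p ∧ p ≤ 0 ∨ 1 ≤ p)
    (ht : t < 1) : (5 / 9) ^ p * (1 + 4 * p / 5 - 9 * p / 5 * t) ≤ (1 - t) ^ p := by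
  have := rpow_add_mul_rpow_sub_one_mul_sub_le_rpow (c := 5 / 9) (by norm_num) (sub_pos.2 ht) hp
  rw [rpow_sub_one (by norm_num) p] at this
  linarith

theorem four_ninths_rpow_div_four_le_of_le_one {x p : ℝ} (hx0 : 0 ≤ x) (hx1 : x ≤ 1)
    (hp : 1 ≤ p) :
    (4 / 9) ^ (x - 1) / 4 ≤ (1 + 4 * p / 5) / (x + 1) ^ 2 - 9 * p / 5 / (x + 2) ^ 2 := by
  have hc : 0 ≤ 4 / 9 / (x + 1) ^ 2 - 1 / (x + 2) ^ 2 := by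
    rw [sub_nonneg, div_le_div_iff₀ (by positivity) (by positivity)]
    nlinarith
  have hbern : (4 / 9 : ℝ) ^ (x - 1) ≤ 1 + (1 - x) * (5 / 4) := by
    rw [show (4 / 9 : ℝ) = (1 + 5 / 4)⁻¹ by norm_num, inv_rpow (by norm_num),
      ← rpow_neg (by norm_num), neg_sub]
    exact rpow_one_add_le_one_add_mul_self (by norm_num) (by linarith) (by linarith)
  have hpoly : (1 + (1 - x) * (5 / 4)) / 4 ≤ 9 / 5 * (1 / (x + 1) ^ 2 - 1 / (x + 2) ^ 2) := by
    have hdiff : 1 / (x + 1) ^ 2 - 1 / (x + 2) ^ 2 = (2 * x + 3) / ((x + 1) ^ 2 * (x + 2) ^ 2) := by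
      field_simp
      ring
    rw [hdiff, ← mul_div_assoc (9 / 5 : ℝ), le_div_iff₀ (by positivity)]
    nlinarith [mul_nonneg hx0 (sub_nonneg.2 hx1),
      mul_nonneg (mul_nonneg hx0 hx0) (sub_nonneg.2 hx1),
      mul_nonneg (mul_nonneg (mul_nonneg hx0 hx0) hx0) (sub_nonneg.2 hx1)]
  calc (4 / 9 : ℝ) ^ (x - 1) / 4 ≤ (1 + (1 - x) * (5 / 4)) / 4 := by gcongr
    _ ≤ 9 / 5 * (1 / (x + 1) ^ 2 - 1 / (x + 2) ^ 2) := hpoly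
    _ = 1 / (x + 1) ^ 2 + 9 / 5 * (4 / 9 / (x + 1) ^ 2 - 1 / (x + 2) ^ 2) := by ring
    _ ≤ 1 / (x + 1) ^ 2 + 9 * p / 5 * (4 / 9 / (x + 1) ^ 2 - 1 / (x + 2) ^ 2) := by
      gcongr
      linarith
    _ = (1 + 4 * p / 5) / (x + 1) ^ 2 - 9 * p / 5 / (x + 2) ^ 2 := by ring

theorem four_ninths_rpow_div_four_le_of_two_le {x p : ℝ} (hx : 2 ≤ x) (hp : p ≤ 0) :
    (4 / 9) ^ (x - 1) / 4 ≤ (1 + 4 * p / 5) / (x + 1) ^ 2 - 9 * p / 5 / (x + 2) ^ 2 := by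
  have hc : 4 / 9 / (x + 1) ^ 2 - 1 / (x + 2) ^ 2 ≤ 0 := by
    rw [sub_nonpos, div_le_div_iff₀ (by positivity) (by positivity)]
    nlinarith
  set u := (3 / 2 : ℝ) ^ (x - 1) with hu
  have hu0 : 0 < u := by positivity
  have hbern : x + 1 ≤ 2 * u := by
    have := one_add_mul_self_le_rpow_one_add (s := 1 / 2) (by norm_num) (p := x - 1) (by linarith)
    norm_num at this
    linarith
  have hinv : (4 / 9 : ℝ) ^ (x - 1) = (u * u)⁻¹ := by
    rw [hu, ← mul_rpow (by norm_num) (by norm_num), ← inv_rpow (by norm_num)]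
    norm_num
  calc (4 / 9 : ℝ) ^ (x - 1) / 4 = 1 / (2 * u) ^ 2 := by rw [hinv]; ring
    _ ≤ 1 / (x + 1) ^ 2 := one_div_le_one_div_of_le (by positivity) (by gcongr)
    _ ≤ 1 / (x + 1) ^ 2 + 9 * p / 5 * (4 / 9 / (x + 1) ^ 2 - 1 / (x + 2) ^ 2) := by
      nlinarith [mul_nonneg (neg_nonneg.2 hp) (neg_nonneg.2 hc)]
    _ = (1 + 4 * p / 5) / (x + 1) ^ 2 - 9 * p / 5 / (x + 2) ^ 2 := by ring

theorem log_four_ninths : log (4 / 9) = -(2 * log (3 / 2)) := by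
  rw [show (4 / 9 : ℝ) = ((3 / 2) ^ 2)⁻¹ by norm_num, log_inv, log_pow]
  push_cast
  ring

theorem hasDerivAt_moment_sub_four_ninths_rpow (α β : ℝ) {x : ℝ} (hx : -1 < x) :
    HasDerivAt (fun x ↦ α / (x + 1) - β / (x + 2) - (4 / 9) ^ (x - 1) / (8 * log (3 / 2)))
      ((4 / 9) ^ (x - 1) / 4 - (α / (x + 1) ^ 2 - β / (x + 2) ^ 2)) x := by
  have hL : log (3 / 2) ≠ 0 := (log_pos (by norm_num)).ne'
  have h1 := (hasDerivAt_const x α).div ((hasDerivAt_id x).add_const 1) (by simp; linarith)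
  have h2 := (hasDerivAt_const x β).div ((hasDerivAt_id x).add_const 2) (by simp; linarith)
  have h3 := ((hasDerivAt_id x).sub_const 1).const_rpow (a := 4 / 9) (by norm_num)
  refine ((h1.sub h2).sub (h3.div_const (8 * log (3 / 2)))).congr_deriv ?_
  rw [log_four_ninths, id]
  field_simp
  ring

theorem moment_sub_le_of_four_ninths_rpow_le {α β a b : ℝ} (ha : -1 < a) (hab : a ≤ b)
    (hderiv : ∀ x ∈ Ioo a b, (4 / 9) ^ (x - 1) / 4 ≤ α / (x + 1) ^ 2 - β / (x + 2) ^ 2) :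
    ((4 / 9) ^ (a - 1) - (4 / 9) ^ (b - 1)) / (8 * log (3 / 2)) ≤
      α / (a + 1) - β / (a + 2) - (α / (b + 1) - β / (b + 2)) := by
  have hanti : AntitoneOn
      (fun x ↦ α / (x + 1) - β / (x + 2) - (4 / 9) ^ (x - 1) / (8 * log (3 / 2)))
      (Icc a b) := by
    refine antitoneOn_of_hasDerivWithinAt_nonpos (f' := fun x ↦
      (4 / 9) ^ (x - 1) / 4 - (α / (x + 1) ^ 2 - β / (x + 2) ^ 2)) (convex_Icc a b)
      (fun x hx ↦ (hasDerivAt_moment_sub_four_ninths_rpow α β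
        (ha.trans_le hx.1)).continuousAt.continuousWithinAt) (fun x hx ↦ ?_) (fun x hx ↦ ?_)
    all_goals rw [interior_Icc] at hx
    · exact (hasDerivAt_moment_sub_four_ninths_rpow α β (ha.trans hx.1)).hasDerivWithinAt
    · exact sub_nonpos.2 (hderiv x hx)
  have := hanti (left_mem_Icc.2 hab) (right_mem_Icc.2 hab) hab
  simp only at this
  rw [sub_div]
  linarith

theorem intervalIntegrable_rpow_mul_one_sub_rpow {x y : ℝ} (hx : 0 ≤ x) (hy : 0 < y) :
    IntervalIntegrable (fun t ↦ t ^ x * (1 - t) ^ (y - 1)) volume 0 1 := by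
  have h : IntervalIntegrable (fun t ↦ (1 - t) ^ (y - 1)) volume 0 1 := by
    have h' := intervalIntegrable_rpow' (r := y - 1) (a := 0) (b := 1) (by linarith)
    simpa using (h'.comp_sub_left 1).symm
  exact h.continuousOn_mul (continuous_rpow_const hx).continuousOn

theorem integral_rpow_mul_sub_mul {x : ℝ} (hx : -1 < x) (α β : ℝ) :
    ∫ t in (0:ℝ)..1, t ^ x * (α - β * t) = α / (x + 1) - β / (x + 2) := by
  have hx1 : x + 1 ≠ 0 := by linarith
  have hx2 : x + 1 + 1 ≠ 0 := by linarith
  have hsplit : EqOn (fun t ↦ t ^ x * (α - β * t)) (fun t ↦ α * t ^ x - β * t ^ (x + 1))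
      (uIcc 0 1) := fun t ht ↦ by
    rw [uIcc_of_le zero_le_one] at ht
    simp only [rpow_add_one' ht.1 hx1]
    ring
  rw [integral_congr hsplit, intervalIntegral.integral_sub, intervalIntegral.integral_const_mul,
    intervalIntegral.integral_const_mul,
    integral_rpow (Or.inl hx), integral_rpow (Or.inl (by linarith))]
  · simp only [one_rpow, zero_rpow hx1, zero_rpow hx2, sub_zero]
    ring
  · exact (intervalIntegrable_rpow' hx).const_mul α
  · exact (intervalIntegrable_rpow' (by linarith)).const_mul β

theorem linear_moment_sub_le_B_sub_B {a b y α β : ℝ} (ha : 0 ≤ a) (hab : a ≤ b) (hy : 0 < y)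
    (hlin : ∀ t ∈ Ioo (0:ℝ) 1, α - β * t ≤ (1 - t) ^ (y - 1)) :
    α / (a + 1) - β / (a + 2) - (α / (b + 1) - β / (b + 2)) ≤ B (a + 1) y - B (b + 1) y := by
  have hb : 0 ≤ b := ha.trans hab
  have hmom (x : ℝ) (hx : 0 ≤ x) :
      IntervalIntegrable (fun t ↦ t ^ x * (α - β * t)) volume 0 1 :=
    (intervalIntegrable_rpow' (by linarith)).mul_continuousOn (by fun_prop)
  simp only [B, add_sub_cancel_right]
  rw [← integral_rpow_mul_sub_mul (by linarith) α β,
    ← integral_rpow_mul_sub_mul (by linarith),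
    ← intervalIntegral.integral_sub (hmom a ha) (hmom b hb),
    ← intervalIntegral.integral_sub (intervalIntegrable_rpow_mul_one_sub_rpow ha hy)
      (intervalIntegrable_rpow_mul_one_sub_rpow hb hy)]
  refine integral_mono_on_of_le_Ioo zero_le_one ((hmom a ha).sub (hmom b hb))
    ((intervalIntegrable_rpow_mul_one_sub_rpow ha hy).sub
      (intervalIntegrable_rpow_mul_one_sub_rpow hb hy)) fun t ht ↦ ?_
  have hpow : t ^ b ≤ t ^ a := rpow_le_rpow_of_exponent_ge ht.1 ht.2.le hab
  nlinarith [mul_le_mul_of_nonneg_left (hlin t ht) (sub_nonneg.2 hpow)]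

theorem stmt12 (a b y : ℝ)
    (h : (2 < y ∧ 0 < a ∧ a < b ∧ b ≤ 1) ∨ (0 < y ∧ y < 1 ∧ 2 ≤ a ∧ a < b)) :
    B (b + 1) y ≤
      B (a + 1) y +
        (1 / (8 * Real.log (3 / 2))) * ((5 : ℝ) / 9) ^ (y - 1) *
          (((4 : ℝ) / 9) ^ (b - 1) - ((4 : ℝ) / 9) ^ (a - 1)) := by
  obtain ⟨ha, hab, hy, hp⟩ :
      0 ≤ a ∧ a ≤ b ∧ 0 < y ∧ (-1 ≤ y - 1 ∧ y - 1 ≤ 0 ∨ 1 ≤ y - 1) := by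
    rcases h with ⟨_, _, _, _⟩ | ⟨_, _, _, _⟩
    · exact ⟨by linarith, by linarith, by linarith, .inr (by linarith)⟩
    · exact ⟨by linarith, by linarith, by linarith, .inl ⟨by linarith, by linarith⟩⟩
  set p := y - 1
  set K := (5 / 9 : ℝ) ^ p
  have hB := linear_moment_sub_le_B_sub_B (α := K * (1 + 4 * p / 5)) (β := K * (9 * p / 5))
    ha hab hy fun t ht ↦ by linarith [five_ninths_rpow_mul_le_one_sub_rpow hp ht.2]
  have hmoment := moment_sub_le_of_four_ninths_rpow_le (α := 1 + 4 * p / 5) (β := 9 * p / 5)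
    (by linarith) hab fun x hx ↦ by
      rcases h with ⟨_, _, _, _⟩ | ⟨_, _, _, _⟩
      · exact four_ninths_rpow_div_four_le_of_le_one (by linarith [hx.1]) (by linarith [hx.2])
          (by linarith)
      · exact four_ninths_rpow_div_four_le_of_two_le (by linarith [hx.1]) (by linarith)
  have hK : 0 ≤ K := by positivity
  linear_combination hB + mul_le_mul_of_nonneg_left hmoment hK
end

section
/- For 0 < a < b and 0 < y < 1, ((b+y)/(a+y))^(1-y)·(a/b) > b^(b-1)(a+y)^(a+y-1) / (a^(a-1)(b+y)^(b+y-1)). -/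
open Real

theorem strictMonoOn_mul_log_one_add_div {y : ℝ} (hy : 0 < y) :
    StrictMonoOn (fun x : ℝ => x * log (1 + y / x)) (Set.Ioi 0) := by
  intro a (ha : 0 < a) b (hb : 0 < b) hab
  have hyb : 0 < y / b := div_pos hy hb
  have hbernoulli : 1 + y / a < (1 + y / b) ^ (b / a) := by
    have h := one_add_mul_self_lt_rpow_one_add (by linarith) hyb.ne' ((one_lt_div ha).mpr hab)
    rwa [div_mul_div_cancel₀' hb.ne'] at h
  calc a * log (1 + y / a) < a * log ((1 + y / b) ^ (b / a)) :=
        mul_lt_mul_of_pos_left (log_lt_log (by positivity) hbernoulli) ha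
    _ = b * log (1 + y / b) := by rw [log_rpow (by positivity)]; field_simp

theorem stmt15_general (a b y : ℝ) (ha : 0 < a) (hab : a < b) (hy0 : 0 < y) :
    ((b + y) / (a + y)) ^ (1 - y) * (a / b) >
      b ^ (b - 1) * (a + y) ^ (a + y - 1) / (a ^ (a - 1) * (b + y) ^ (b + y - 1)) := by
  have hb : 0 < b := ha.trans hab
  have hay : 0 < a + y := by linarith
  have hby : 0 < b + y := by linarith
  have hmono : a * (log (a + y) - log a) < b * (log (b + y) - log b) := by
    have h := strictMonoOn_mul_log_one_add_div hy0 ha hb hab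
    simpa only [one_add_div ha.ne', one_add_div hb.ne', log_div hay.ne' ha.ne',
      log_div hby.ne' hb.ne'] using h
  -- After taking logarithms, the difference of the two sides is
  -- `b * log (1 + y / b) - a * log (1 + y / a)`.
  rw [gt_iff_lt, ← log_lt_log_iff (by positivity) (by positivity),
    log_mul (by positivity) (by positivity), log_div (by positivity) (by positivity),
    log_rpow (by positivity), log_div hby.ne' hay.ne', log_mul (by positivity) (by positivity),
    log_mul (by positivity) (by positivity), log_div ha.ne' hb.ne',
    log_rpow hb, log_rpow hay, log_rpow ha, log_rpow hby]
  linear_combination hmono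

theorem stmt15 (a b y : ℝ) (ha : 0 < a) (hab : a < b) (hy0 : 0 < y) (hy1 : y < 1) :
    ((b + y) / (a + y)) ^ (1 - y) * (a / b) >
      b ^ (b - 1) * (a + y) ^ (a + y - 1) / (a ^ (a - 1) * (b + y) ^ (b + y - 1)) :=
  stmt15_general a b y ha hab hy0
end

section
/- For 0 < a < b and y ≥ 1, a(b+1)^(b+1)(a+y)^(a+y) / (b(a+1)^(a+1)(b+y)^(b+y)) ≤ (a(b+y))/(b(a+y)) · ((a+y+1)/(b+y+1))^y. -/
/-!
Taking logarithms, the inequality says `f b ≤ f a` for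
`f x = (x + 1) log (x + 1) - (x + y + 1) log (x + y) + y log (x + y + 1)`.
Since `f' x = log ((x + 1) / (x + y)) - 1 / (x + y) + y / (x + y + 1)` and
`log t ≤ t - 1`, we get `f' x ≤ y / (x + y + 1) - y / (x + y) ≤ 0`, so `f` is antitone on `(0, ∞)`.
-/

open Real Set

noncomputable def logProfile (y x : ℝ) : ℝ :=
  (x + 1) * log (x + 1) - (x + y + 1) * log (x + y) + y * log (x + y + 1)

section

variable {x y : ℝ}

lemma hasDerivAt_logProfile (hx : 0 < x) (hy : 0 ≤ y) :
    HasDerivAt (logProfile y)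
      (log (x + 1) - log (x + y) - 1 / (x + y) + y / (x + y + 1)) x := by
  have hx1 : x + 1 ≠ 0 := by positivity
  have hxy : x + y ≠ 0 := by positivity
  have hxy1 : x + y + 1 ≠ 0 := by positivity
  have d1 : HasDerivAt (fun x : ℝ => x + 1) 1 x := (hasDerivAt_id x).add_const 1
  have d2 : HasDerivAt (fun x : ℝ => x + y) 1 x := (hasDerivAt_id x).add_const y
  have d3 : HasDerivAt (fun x : ℝ => x + y + 1) 1 x := d2.add_const 1
  refine (((d1.mul (d1.log hx1)).sub (d3.mul (d2.log hxy))).add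
    ((d3.log hxy1).const_mul y)).congr_deriv ?_
  field_simp
  ring

lemma logProfile_deriv_nonpos (hx : 0 < x) (hy : 0 ≤ y) :
    log (x + 1) - log (x + y) - 1 / (x + y) + y / (x + y + 1) ≤ 0 := by
  have hxy : 0 < x + y := by positivity
  have hlog : log ((x + 1) / (x + y)) ≤ (x + 1) / (x + y) - 1 :=
    log_le_sub_one_of_pos (by positivity)
  rw [log_div (by positivity) hxy.ne'] at hlog
  have hshift : (x + 1) / (x + y) - 1 - 1 / (x + y) = -(y / (x + y)) := by
    field_simp
    ring
  have hmono : y / (x + y + 1) ≤ y / (x + y) :=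
    div_le_div_of_nonneg_left hy hxy (by linarith)
  linarith

lemma antitoneOn_logProfile (hy : 0 ≤ y) : AntitoneOn (logProfile y) (Ioi 0) := by
  refine antitoneOn_of_hasDerivWithinAt_nonpos (convex_Ioi 0) (f' := fun x =>
    log (x + 1) - log (x + y) - 1 / (x + y) + y / (x + y + 1))
    (fun x hx => (hasDerivAt_logProfile hx hy).continuousAt.continuousWithinAt) ?_ ?_
  · rw [interior_Ioi]
    exact fun x hx => (hasDerivAt_logProfile hx hy).hasDerivWithinAt
  · rw [interior_Ioi]
    exact fun x hx => logProfile_deriv_nonpos hx hy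

end

theorem stmt19 (a b y : ℝ) (ha : 0 < a) (hab : a < b) (hy : 1 ≤ y) :
    a * (b + 1) ^ (b + 1) * (a + y) ^ (a + y) /
        (b * (a + 1) ^ (a + 1) * (b + y) ^ (b + y)) ≤
      (a * (b + y)) / (b * (a + y)) * ((a + y + 1) / (b + y + 1)) ^ y := by
  have hb : 0 < b := ha.trans hab
  have hy0 : 0 ≤ y := by linarith
  have hprofile := antitoneOn_logProfile hy0 (mem_Ioi.2 ha) (mem_Ioi.2 hb) hab.le
  unfold logProfile at hprofile
  rw [← log_le_log_iff (by positivity) (by positivity)]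
  simp (disch := positivity) only [log_mul, log_div, log_rpow]
  linarith
end
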